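/- For any element w of a Coxeter group W, the standard parabolic subgroup W_{I_w} generated by the descent set I_w = { i ∈ I : l(w · r_i) < l(w) } is a finite group. -/

import Mathlib

/-!
If every `i ∈ J` is a right descent of `w`, then every `u ∈ W_J` has a `J`-word `β` with
`ℓ (w * u⁻¹) + β.length ≤ ℓ w`. To pass from `u` to `u * s i` with `i ∈ J`, write `w` as the
word `α ++ β` with `α` reduced for `w * u⁻¹`; the exchange condition for the descent `i` of `w`
deletes a letter either from `α`, so that `w * (u * s i)⁻¹` is shorter than `w * u⁻¹` and
`β ++ [i]` works, or from `β`, which yields a shorter `J`-word for `u * s i` to recurse on.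
Hence `W_J` consists of products of at most `ℓ w` simple reflections `s i`, `i ∈ J`, and all of
these occur in the (finite) right inversion sequence of any word for `w`.

The exchange condition comes from Tits' permutation representation of `W` on `W × ZMod 2`: it
shows that the parity of the number of occurrences of `t` in the right inversion sequence of a
word depends only on the product of the word.
-/

/-- The standard parabolic subgroup of a Coxeter group generated by the
simple reflections indexed by `J`. -/
def CoxeterSystem.parabolic {B W : Type*} [Group W] {M : CoxeterMatrix B}
    (cs : CoxeterSystem M W) (J : Set B) : Subgroup W :=
  Subgroup.closure (cs.simple '' J)

theorem List.even_count_of_getElem_add_eq {α : Type*} [BEq α] {l : List α} {m : ℕ}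
    (hl : l.length = 2 * m) (h : ∀ k (hk : k < m), l[m + k] = l[k]) (a : α) :
    Even (l.count a) := by
  have hhalves : l.drop m = l.take m :=
    List.ext_getElem (by simp; omega) fun k h₁ h₂ ↦ by
      simp only [List.getElem_drop, List.getElem_take]
      exact h k (by simp at h₂; omega)
  rw [← List.take_append_drop m l, List.count_append, hhalves]
  exact ⟨_, rfl⟩

theorem Set.Finite.lists_length_le {α : Type*} {S : Set α} (hS : S.Finite) (n : ℕ) :
    {l : List α | l.length ≤ n ∧ ∀ x ∈ l, x ∈ S}.Finite := by
  have := hS.to_subtype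
  refine ((List.finite_length_le S n).image (List.map Subtype.val)).subset ?_
  rintro l ⟨hl, hlS⟩
  lift l to List S using hlS
  exact ⟨l, by simpa using hl, rfl⟩

namespace CoxeterSystem

variable {B W : Type*} [Group W] {M : CoxeterMatrix B} (cs : CoxeterSystem M W)

local prefix:100 "s" => cs.simple
local prefix:100 "π" => cs.wordProd
local prefix:100 "ℓ" => cs.length
local prefix:100 "ris " => cs.rightInvSeq

theorem prod_map_alternatingWord_two_mul {G : Type*} [Monoid G] (f : B → G) (i j : B) (p : ℕ) :
    ((alternatingWord i j (2 * p)).map f).prod = (f i * f j) ^ p := by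
  induction p with
  | zero => simp [alternatingWord]
  | succ p ih =>
    rw [mul_add_one, alternatingWord_succ', alternatingWord_succ', pow_succ', ← ih]
    simp [mul_assoc]

theorem reverse_alternatingWord_two_mul (i j : B) (p : ℕ) :
    (alternatingWord i j (2 * p)).reverse = alternatingWord j i (2 * p) := by
  induction p with
  | zero => simp [alternatingWord]
  | succ p ih =>
    rw [mul_add_one, alternatingWord_succ', alternatingWord_succ', alternatingWord_succ,
      alternatingWord_succ, ← ih]
    simp

theorem wordProd_alternatingWord_add_two_mul (i j : B) (k : ℕ) :
    π (alternatingWord i j (2 * (M i j + k) + 1)) = π (alternatingWord i j (2 * k + 1)) := by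
  rw [prod_alternatingWord_eq_mul_pow, prod_alternatingWord_eq_mul_pow,
    show (2 * (M i j + k) + 1) / 2 = M i j + k by omega, show (2 * k + 1) / 2 = k by omega,
    pow_add, simple_mul_simple_pow, one_mul]
  simp

section

variable [DecidableEq W]

def inversionParityPerm (i : B) : Equiv.Perm (W × ZMod 2) :=
  Equiv.prodShear (MulAut.conj (s i)).toEquiv fun t ↦ Equiv.addRight (if t = s i then 1 else 0)

theorem inversionParityPerm_apply (i : B) (t : W) (ε : ZMod 2) :
    cs.inversionParityPerm i (t, ε) = (s i * t * (s i)⁻¹, ε + if t = s i then 1 else 0) := rfl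

theorem prod_map_inversionParityPerm_apply (ω : List B) (t : W) (ε : ZMod 2) :
    (ω.map cs.inversionParityPerm).prod (t, ε) =
      (π ω * t * (π ω)⁻¹, ε + (ris ω).count t) := by
  induction ω with
  | nil => simp
  | cons i ω ih =>
    have hcond : π ω * t * (π ω)⁻¹ = s i ↔ (π ω)⁻¹ * s i * π ω = t := by
      constructor <;> intro h <;> rw [← h] <;> group
    rw [List.map_cons, List.prod_cons, Equiv.Perm.mul_apply, ih, inversionParityPerm_apply,
      rightInvSeq.eq_2, List.count_cons, if_congr hcond rfl rfl, wordProd_cons]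
    simp only [beq_iff_eq, Nat.cast_add, Nat.cast_ite, Nat.cast_one, Nat.cast_zero, add_assoc,
      mul_inv_rev, mul_assoc]

theorem even_count_rightInvSeq_braid (i j : B) (t : W) :
    Even ((ris (alternatingWord i j (2 * M i j))).count t) := by
  rw [← List.count_reverse, ← leftInvSeq_reverse, reverse_alternatingWord_two_mul]
  refine List.even_count_of_getElem_add_eq (m := M i j) (by simp) (fun k hk ↦ ?_) t
  rw [getElem_leftInvSeq_alternatingWord cs j i _ _ (by omega),
    getElem_leftInvSeq_alternatingWord cs j i _ _ (by omega),
    wordProd_alternatingWord_add_two_mul]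

theorem isLiftable_inversionParityPerm : M.IsLiftable cs.inversionParityPerm := by
  intro i j
  ext1 ⟨t, ε⟩
  have hcount := ZMod.natCast_eq_zero_iff_even.mpr (cs.even_count_rightInvSeq_braid i j t)
  rw [← prod_map_alternatingWord_two_mul, prod_map_inversionParityPerm_apply,
    prod_alternatingWord_eq_mul_pow]
  simp [hcount, simple_mul_simple_pow]

def inversionParityRep : W →* Equiv.Perm (W × ZMod 2) :=
  cs.lift ⟨cs.inversionParityPerm, cs.isLiftable_inversionParityPerm⟩

theorem inversionParityRep_wordProd (ω : List B) :
    cs.inversionParityRep (π ω) = (ω.map cs.inversionParityPerm).prod := by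
  rw [wordProd, map_list_prod, List.map_map]
  congr 2
  ext1 i
  exact cs.lift_apply_simple cs.isLiftable_inversionParityPerm i

theorem natCast_count_rightInvSeq_eq {ω ω' : List B} (h : π ω = π ω') (t : W) :
    ((ris ω).count t : ZMod 2) = (ris ω').count t := by
  have := congrArg (fun w ↦ (cs.inversionParityRep w (t, 0)).2) h
  simpa [inversionParityRep_wordProd, prod_map_inversionParityPerm_apply] using this

end

theorem simple_mem_rightInvSeq_of_isRightDescent {ω : List B} {i : B}
    (h : cs.IsRightDescent (π ω) i) : s i ∈ ris ω := by
  classical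
  obtain ⟨β, hβ, hβω⟩ := cs.exists_isReduced (π ω * s i)
  have hω : π ω = π (β.concat i) := by
    rw [wordProd_concat, ← hβω, mul_assoc, simple_mul_simple_self, mul_one]
  have hred : cs.IsReduced (β.concat i) := by
    have := cs.isRightDescent_iff.mp h
    rw [IsReduced, ← hω, List.length_concat, ← hβ.eq, ← hβω]
    omega
  have hmem : s i ∈ ris (β.concat i) := by
    rw [rightInvSeq_concat, List.concat_eq_append]
    exact List.mem_append_right _ (List.mem_singleton_self _)
  have hodd : ((ris ω).count (s i) : ZMod 2) = 1 := by
    rw [cs.natCast_count_rightInvSeq_eq hω, List.count_eq_one_of_mem hred.nodup_rightInvSeq hmem,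
      Nat.cast_one]
  by_contra hnot
  rw [List.count_eq_zero_of_not_mem hnot, Nat.cast_zero] at hodd
  exact zero_ne_one hodd

theorem exists_eraseIdx_of_isRightDescent {ω : List B} {i : B}
    (h : cs.IsRightDescent (π ω) i) : ∃ k < ω.length, π ω * s i = π (ω.eraseIdx k) := by
  obtain ⟨k, hk, hks⟩ := List.mem_iff_getElem.mp (cs.simple_mem_rightInvSeq_of_isRightDescent h)
  refine ⟨k, by simpa using hk, ?_⟩
  rw [← hks, ← List.getD_eq_getElem _ 1 hk, wordProd_mul_getD_rightInvSeq]

theorem exchange_append {α β : List B} {i : B} (h : cs.IsRightDescent (π α * π β) i) :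
    (∃ α' : List B, α'.length < α.length ∧ π α * π β * s i = π α' * π β) ∨
      ∃ β' : List B, β'.Sublist β ∧ β'.length < β.length ∧ π β * s i = π β' := by
  rw [← wordProd_append] at h
  obtain ⟨k, hk, hks⟩ := cs.exists_eraseIdx_of_isRightDescent h
  rw [List.length_append] at hk
  by_cases hkα : k < α.length
  · refine Or.inl ⟨α.eraseIdx k, by rw [List.length_eraseIdx_of_lt hkα]; omega, ?_⟩
    rw [← wordProd_append, hks, List.eraseIdx_append_of_lt_length hkα, wordProd_append]
  · refine Or.inr ⟨β.eraseIdx (k - α.length), List.eraseIdx_sublist _ _,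
      by rw [List.length_eraseIdx_of_lt (by omega)]; omega, ?_⟩
    rw [List.eraseIdx_append_of_length_le (by omega), wordProd_append, wordProd_append,
      mul_assoc] at hks
    exact mul_left_cancel hks

section Parabolic

variable {w : W} {J : Set B}

theorem exists_word_of_mem_parabolic {u : W} (hu : u ∈ cs.parabolic J) :
    ∃ ω : List B, (∀ i ∈ ω, i ∈ J) ∧ π ω = u := by
  induction hu using Subgroup.closure_induction with
  | mem _ hx =>
    obtain ⟨i, hi, rfl⟩ := hx
    exact ⟨[i], by simpa using hi, wordProd_singleton cs i⟩
  | one => exact ⟨[], by simp, wordProd_nil cs⟩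
  | mul _ _ _ _ ha hb =>
    obtain ⟨ωa, haJ, rfl⟩ := ha
    obtain ⟨ωb, hbJ, rfl⟩ := hb
    refine ⟨ωa ++ ωb, fun i hi ↦ ?_, wordProd_append cs ωa ωb⟩
    rcases List.mem_append.mp hi with hi | hi
    exacts [haJ i hi, hbJ i hi]
  | inv _ _ ha =>
    obtain ⟨ω, hJ, rfl⟩ := ha
    exact ⟨ω.reverse, fun i hi ↦ hJ i (List.mem_reverse.mp hi), wordProd_reverse cs ω⟩

theorem exists_parabolic_word_length_add_le (hJ : ∀ i ∈ J, cs.IsRightDescent w i)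
    (ω : List B) (hω : ∀ i ∈ ω, i ∈ J) :
    ∃ β : List B, (∀ i ∈ β, i ∈ J) ∧ π β = π ω ∧ β.length ≤ ω.length ∧
      ℓ (w * (π β)⁻¹) + β.length ≤ ℓ w := by
  induction hn : ω.length using Nat.strong_induction_on generalizing ω with
  | _ n ih =>
  obtain rfl | ⟨ω₀, i, rfl⟩ := List.eq_nil_or_concat ω
  · exact ⟨[], by simp, rfl, Nat.zero_le _, by simp⟩
  simp only [List.concat_eq_append, List.mem_append, List.mem_singleton, List.length_append,
    List.length_singleton] at hω hn
  obtain ⟨β, hβJ, hβ, hβlen, hβw⟩ :=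
    ih ω₀.length (by omega) ω₀ (fun j hj ↦ hω j (Or.inl hj)) rfl
  have hi : i ∈ J := hω i (Or.inr rfl)
  obtain ⟨α, hα, hαw⟩ := cs.exists_isReduced (w * (π β)⁻¹)
  have hw : w = π α * π β := by rw [← hαw, inv_mul_cancel_right]
  rcases cs.exchange_append (hw ▸ hJ i hi) with ⟨α', hα'len, hα'⟩ | ⟨β', hβ'sub, hβ'len, hβ'⟩
  · -- the letter deleted by the exchange lies in `α`: append `i` to `β`
    refine ⟨β.concat i, fun j hj ↦ ?_, by rw [wordProd_concat, wordProd_concat, hβ],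
      by rw [List.length_concat]; omega, ?_⟩
    · rw [List.concat_eq_append, List.mem_append, List.mem_singleton] at hj
      rcases hj with hj | rfl
      exacts [hβJ j hj, hi]
    have hα'w : w * (π (β.concat i))⁻¹ = π α' := by
      rw [wordProd_concat, mul_inv_rev, inv_simple, ← mul_assoc, hw, hα', mul_inv_cancel_right]
    have hα'ℓ := cs.length_wordProd_le α'
    have hαℓ := hα.eq
    rw [← hαw] at hαℓ
    rw [hα'w, List.length_concat]
    omega
  · -- the letter deleted lies in `β`: `π β * s i` has a shorter `J`-word, recurse on it
    obtain ⟨γ, hγJ, hγ, hγlen, hγw⟩ :=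
      ih β'.length (by omega) β' (fun j hj ↦ hβJ j (hβ'sub.subset hj)) rfl
    exact ⟨γ, hγJ, by rw [hγ, ← hβ', hβ, wordProd_concat], by omega, hγw⟩

end Parabolic

end CoxeterSystem

/-- For any element `w` of a Coxeter group `W`, the standard parabolic subgroup generated by
the right descent set `I_w = { i : l(w · r_i) < l(w) }` is a finite group. -/
theorem descent_parabolic_finite
    {B W : Type*} [Group W] {M : CoxeterMatrix B} (cs : CoxeterSystem M W) (w : W) :
    Finite (cs.parabolic {i | cs.length (w * cs.simple i) < cs.length w}) := by
  obtain ⟨α, rfl⟩ := cs.wordProd_surjective w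
  set J := {i | cs.length (cs.wordProd α * cs.simple i) < cs.length (cs.wordProd α)}
  have hJ : ∀ i ∈ J, cs.IsRightDescent (cs.wordProd α) i := fun _ hi ↦ hi
  have hbounded := ((List.finite_toSet (cs.rightInvSeq α)).lists_length_le
    (cs.length (cs.wordProd α))).image List.prod
  refine Set.Finite.to_subtype (hbounded.subset ?_)
  intro u hu
  obtain ⟨ω, hωJ, rfl⟩ := cs.exists_word_of_mem_parabolic hu
  obtain ⟨β, hβJ, hβ, -, hβw⟩ := cs.exists_parabolic_word_length_add_le hJ ω hωJ
  refine ⟨β.map cs.simple, ⟨by rw [List.length_map]; omega, ?_⟩, hβ⟩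
  simp only [List.mem_map]
  rintro _ ⟨i, hi, rfl⟩
  exact cs.simple_mem_rightInvSeq_of_isRightDescent (hJ i (hβJ i hi))
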